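/- Let β, β̃ ∈ ℝ^p both be nonzero, set Δ = β̃ − β, let k ∈ {1,…,p}, and define w_k(β) = −(1/2)(‖β‖₂² I + 2ββᵀ)^{-1} e_k and w_k(β̃) = −(1/2)(‖β̃‖₂² I + 2β̃β̃ᵀ)^{-1} e_k. Then ‖w_k(β̃) − w_k(β)‖₂ ≤ (1/2)|1/‖β‖₂² − 1/‖β̃‖₂²| + (|β̃_k|/(3‖β̃‖₂⁴))‖Δ‖₂ + (1/3)|β̃_k/‖β̃‖₂⁴ − β_k/‖β‖₂⁴| · ‖β‖₂. -/

import Mathlib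

open MeasureTheory ProbabilityTheory

noncomputable section

/-- Euclidean dot product on `ℝ^p`. -/
def dot {p : ℕ} (u v : Fin p → ℝ) : ℝ := ∑ i, u i * v i

/-- Euclidean norm on `ℝ^p`. -/
def nrm {p : ℕ} (v : Fin p → ℝ) : ℝ := Real.sqrt (∑ i, (v i)^2)

/-- The matrix `‖b‖₂² I + 2 b bᵀ` (population Fisher information / Hessian). -/
def fisherM {p : ℕ} (b : Fin p → ℝ) : Matrix (Fin p) (Fin p) ℝ :=
  (nrm b ^ 2) • (1 : Matrix (Fin p) (Fin p) ℝ) + (2:ℝ) • Matrix.vecMulVec b b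

/-- The correction direction `w_k(b) = -(1/2) (‖b‖₂² I + 2 b bᵀ)⁻¹ e_k`. -/
def wvec {p : ℕ} (b : Fin p → ℝ) (k : Fin p) : Fin p → ℝ :=
  (-(1/2) : ℝ) • (fisherM b)⁻¹.mulVec (Pi.single k 1)

/-- Operator (spectral) norm of a matrix acting on Euclidean space. -/
def opNorm {p : ℕ} (A : Matrix (Fin p) (Fin p) ℝ) : ℝ :=
  ‖LinearMap.toContinuousLinearMap (Matrix.toEuclideanLin A)‖

/-- Restriction of a vector to a coordinate set `S` (zero outside `S`). -/
def restr {p : ℕ} (S : Finset (Fin p)) (v : Fin p → ℝ) : Fin p → ℝ :=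
  fun i => if i ∈ S then v i else 0

/-- Gradient of the phase-retrieval objective
`f(b) = (1/(4n)) ∑ⱼ ((xⱼᵀb)² - yⱼ)²`, namely
`∇f(b) = (1/n) ∑ⱼ ((xⱼᵀb)² - yⱼ)(xⱼᵀb) xⱼ`. -/
def gradf {p n : ℕ} (x : Fin n → Fin p → ℝ) (y : Fin n → ℝ) (b : Fin p → ℝ) : Fin p → ℝ :=
  (1/(n:ℝ)) • ∑ j, (((dot (x j) b)^2 - y j) * dot (x j) b) • x j

/-! The matrix `‖b‖² I + 2 b bᵀ` is a rank-one perturbation of a multiple of the identity, so the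
Sherman–Morrison formula inverts it explicitly as `‖b‖⁻² I − (2/3)‖b‖⁻⁴ b bᵀ`, which gives
`w_k(b) = −e_k/(2‖b‖²) + (b_k/(3‖b‖⁴)) b`. Hence `w_k(β̃) − w_k(β) = c₁ e_k + c₂ Δ + c₃ β` with
`c₁ = (1/‖β‖² − 1/‖β̃‖²)/2`, `c₂ = β̃_k/(3‖β̃‖⁴)`, `c₃ = (β̃_k/‖β̃‖⁴ − β_k/‖β‖⁴)/3`, and the bound is
the triangle inequality for this sum. -/

theorem Matrix.inv_smul_one_add_smul_vecMulVec {n 𝕜 : Type*} [Fintype n] [DecidableEq n]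
    [Field 𝕜] {a c : 𝕜} (u v : n → 𝕜) (ha : a ≠ 0) (hac : a + c * (v ⬝ᵥ u) ≠ 0) :
    (a • (1 : Matrix n n 𝕜) + c • vecMulVec u v)⁻¹
      = a⁻¹ • (1 : Matrix n n 𝕜) - (c / (a * (a + c * (v ⬝ᵥ u)))) • vecMulVec u v := by
  refine Matrix.inv_eq_right_inv ?_
  simp only [add_mul, mul_sub, Matrix.smul_mul, Matrix.mul_smul, Matrix.one_mul, Matrix.mul_one,
    vecMulVec_mul_vecMulVec, vecMulVec_smul, smul_smul]
  have hcoef : a⁻¹ * c - (c / (a * (a + c * (v ⬝ᵥ u))) * a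
      + c / (a * (a + c * (v ⬝ᵥ u))) * (c * (v ⬝ᵥ u))) = 0 := by
    field_simp
    ring
  rw [inv_mul_cancel₀ ha, one_smul, ← add_smul, add_sub_assoc, ← sub_smul, hcoef, zero_smul,
    add_zero]

lemma nrm_eq_norm {p : ℕ} (v : Fin p → ℝ) : nrm v = ‖WithLp.toLp 2 v‖ := by
  simp [nrm, EuclideanSpace.norm_eq, sq_abs]

lemma nrm_smul_add_smul_add_smul_le {p : ℕ} (a b c : ℝ) (x y z : Fin p → ℝ) :
    nrm (a • x + b • y + c • z) ≤ |a| * nrm x + |b| * nrm y + |c| * nrm z := by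
  simpa only [nrm_eq_norm, WithLp.toLp_add, WithLp.toLp_smul, norm_smul, Real.norm_eq_abs]
    using norm_add₃_le (a := a • WithLp.toLp 2 x) (b := b • WithLp.toLp 2 y)
      (c := c • WithLp.toLp 2 z)

lemma nrm_single {p : ℕ} (k : Fin p) : nrm (Pi.single k 1 : Fin p → ℝ) = 1 := by
  simp [nrm_eq_norm]

lemma nrm_sq {p : ℕ} (b : Fin p → ℝ) : nrm b ^ 2 = b ⬝ᵥ b := by
  rw [nrm, Real.sq_sqrt (by positivity), dotProduct]
  simp only [sq]

lemma nrm_ne_zero {p : ℕ} {b : Fin p → ℝ} (hb : b ≠ 0) : nrm b ≠ 0 := by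
  simpa [nrm_eq_norm] using hb

lemma fisherM_inv {p : ℕ} {b : Fin p → ℝ} (hb : b ≠ 0) :
    (fisherM b)⁻¹ = (nrm b ^ 2)⁻¹ • (1 : Matrix (Fin p) (Fin p) ℝ)
      - (2 / (3 * nrm b ^ 4)) • Matrix.vecMulVec b b := by
  have hnrm := nrm_ne_zero hb
  rw [fisherM, Matrix.inv_smul_one_add_smul_vecMulVec b b (by positivity)
    (by rw [← nrm_sq]; positivity)]
  congr 2
  rw [← nrm_sq]
  field_simp
  ring

lemma wvec_eq {p : ℕ} {b : Fin p → ℝ} (hb : b ≠ 0) (k : Fin p) :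
    wvec b k = (-(1 / (2 * nrm b ^ 2))) • (Pi.single k 1 : Fin p → ℝ)
      + (b k / (3 * nrm b ^ 4)) • b := by
  rw [wvec, fisherM_inv hb, Matrix.sub_mulVec, Matrix.smul_mulVec, Matrix.smul_mulVec,
    Matrix.one_mulVec, Matrix.vecMulVec_mulVec, dotProduct_single, mul_one]
  ext i
  simp only [Pi.add_apply, Pi.sub_apply, Pi.smul_apply, smul_eq_mul, MulOpposite.smul_eq_mul_unop,
    MulOpposite.unop_op]
  ring

lemma wvec_sub_wvec {p : ℕ} {β βt : Fin p → ℝ} (hβ : β ≠ 0) (hβt : βt ≠ 0) (k : Fin p) :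
    wvec βt k - wvec β k
      = ((1/2) * (1 / nrm β ^ 2 - 1 / nrm βt ^ 2)) • (Pi.single k 1 : Fin p → ℝ)
        + (βt k / (3 * nrm βt ^ 4)) • (βt - β)
        + ((1/3) * (βt k / nrm βt ^ 4 - β k / nrm β ^ 4)) • β := by
  rw [wvec_eq hβt, wvec_eq hβ]
  module

/-- Bound on the difference between correction directions computed at `β̃` and at `β`:
`‖w_k(β̃) − w_k(β)‖₂ ≤ (1/2)|1/‖β‖₂² − 1/‖β̃‖₂²| + (|β̃_k|/(3‖β̃‖₂⁴))‖Δ‖₂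
  + (1/3)|β̃_k/‖β̃‖₂⁴ − β_k/‖β‖₂⁴|‖β‖₂`, where `Δ = β̃ − β`. -/
theorem stmt_17 {p : ℕ} (β βt : Fin p → ℝ) (hβ : β ≠ 0) (hβt : βt ≠ 0) (k : Fin p) :
    nrm (wvec βt k - wvec β k)
      ≤ (1/2) * |1 / nrm β ^ 2 - 1 / nrm βt ^ 2|
        + (|βt k| / (3 * nrm βt ^ 4)) * nrm (βt - β)
        + (1/3) * |βt k / nrm βt ^ 4 - β k / nrm β ^ 4| * nrm β := by
  rw [wvec_sub_wvec hβ hβt]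
  refine (nrm_smul_add_smul_add_smul_le _ _ _ _ _ _).trans_eq ?_
  rw [nrm_single, abs_mul, abs_mul, abs_div (βt k),
    abs_of_nonneg (by positivity : (0 : ℝ) ≤ 3 * nrm βt ^ 4)]
  norm_num
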